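/- For every n ≥ 1, as an identity of rational functions in z: Σ_{F ∈ PF(n)} ∏_{v ∈ F} (2h_v − z)^{h_v − 1} / [h_v · (2h_v − 2 + z)^{h_v − 2}] = (z/n!)·(2n + z)^{n-1}. -/

import Mathlib

/-- Plane trees: nonempty rooted trees whose subtrees at each vertex are linearly ordered. -/
inductive PTree : Type
  | node : List PTree → PTree

namespace PTree

mutual
/-- The number of vertices of a plane tree. -/
def size : PTree → ℕ
  | .node cs => sizeList cs + 1
/-- The total number of vertices of a plane forest (a list of plane trees). -/
def sizeList : List PTree → ℕ
  | [] => 0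
  | t :: ts => size t + sizeList ts
end

mutual
/-- The multiset of hook lengths of a plane tree: the hook length of a vertex
is the number of its descendants, counting the vertex itself. -/
def hooks : PTree → Multiset ℕ+
  | .node cs => ⟨sizeList cs + 1, Nat.succ_pos _⟩ ::ₘ hooksList cs
/-- The multiset of hook lengths of a plane forest. -/
def hooksList : List PTree → Multiset ℕ+
  | [] => 0
  | t :: ts => hooks t + hooksList ts
end

end PTree

/-!
Removing the root of the first tree of a plane forest with `n + 1` vertices leaves two forests
with `i` and `j` vertices, `i + j = n`, and the removed root has hook length `i + 1`. Hence the
weighted forest sums satisfy `S (n + 1) = ∑_{i + j = n} φ (i + 1) S i S j` with `S 0 = 1`.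

The right-hand side is `A_n(z) / n!` for the Abel polynomials `A_n(x) = x (x + 2n)^(n-1)`, which
are of binomial type (Abel's identity, proved by finite differences). With `x = -z` and `y = z`,
`∑_{i + j = n} A_i(x) A_j(y) / (i! j!) = A_n(x + y) / n!` vanishes for `n ≥ 1`; since
`φ (i + 1) A_i(z) / i! = -A_{i+1}(-z) / (i + 1)!`, isolating the term `i = 0` shows that
`A_n(z) / n!` satisfies the same recurrence.
-/

open Finset Polynomial
open scoped Nat

section Abel

variable {R : Type*} [CommRing R]

theorem sum_neg_one_pow_mul_choose_mul_pow_eq_zero {d n : ℕ} (h : d < n) (x c : R) :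
    ∑ k ∈ range (n + 1), (-1) ^ (n - k) * n.choose k * (x + c * k) ^ d = 0 := by
  have hdeg : ((C c * X + C x) ^ d).natDegree < n :=
    (natDegree_pow_le_of_le d natDegree_linear_le).trans_lt (by simpa using h)
  have := congrFun (fwdDiff_iter_eq_zero_of_degree_lt hdeg) 0
  simp only [fwdDiff_iter_eq_sum_shift, zsmul_eq_mul, zero_add, nsmul_one, eval_pow, eval_add,
    eval_mul, eval_C, eval_X, Int.cast_mul, Int.cast_pow, Int.cast_neg, Int.cast_one,
    Int.cast_natCast, Pi.zero_apply] at this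
  rw [← this]
  exact sum_congr rfl fun k _ => by ring

-- `abelTerm c x 0 = 1` is the formal value of `x (x + c * 0) ^ (0 - 1)`.
def abelTerm (c x : R) : ℕ → R
  | 0 => 1
  | k + 1 => x * (x + c * (k + 1 : ℕ)) ^ k

@[simp]
lemma abelTerm_zero (c x : R) : abelTerm c x 0 = 1 := rfl

lemma abelTerm_succ (c x : R) (k : ℕ) :
    abelTerm c x (k + 1) = x * (x + c * (k + 1 : ℕ)) ^ k :=
  rfl

lemma abelTerm_mul_pow_sub (c x : R) {k m : ℕ} (hk : k ≤ m) (hm : 0 < m) :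
    abelTerm c x k * (x + c * k) ^ (m - k) = x * (x + c * k) ^ (m - 1) := by
  cases k with
  | zero => simp [mul_pow_sub_one hm.ne']
  | succ k => rw [abelTerm_succ, mul_assoc, ← pow_add]; congr 2; omega

lemma sum_neg_one_pow_mul_choose_mul_abelTerm_mul_pow_eq_zero (c x : R) {m : ℕ} (hm : 0 < m) :
    ∑ k ∈ range (m + 1), (-1) ^ (m - k) * m.choose k * (abelTerm c x k * (x + c * k) ^ (m - k))
      = 0 := by
  calc _ = x * ∑ k ∈ range (m + 1), (-1) ^ (m - k) * m.choose k * (x + c * k) ^ (m - 1) := by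
        rw [mul_sum]
        refine sum_congr rfl fun k hk => ?_
        rw [abelTerm_mul_pow_sub c x (Nat.lt_succ_iff.mp (mem_range.mp hk)) hm]
        ring
    _ = 0 := by rw [sum_neg_one_pow_mul_choose_mul_pow_eq_zero (by omega), mul_zero]

lemma Nat.choose_mul_choose_sub_comm (n k i : ℕ) :
    n.choose k * (n - k).choose i = n.choose i * (n - i).choose k := by
  have hk := Nat.choose_mul (n := n) (Nat.le_add_right k i)
  have hi := Nat.choose_mul (n := n) (Nat.le_add_left i k)
  rw [Nat.add_sub_cancel_left] at hk
  rw [Nat.add_sub_cancel] at hi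
  rw [← hk, ← hi, Nat.choose_symm_add]

theorem sum_choose_mul_abelTerm_mul_pow (c x y : R) (n : ℕ) :
    ∑ ij ∈ antidiagonal n, n.choose ij.1 * abelTerm c x ij.1 * (y + c * ij.2) ^ ij.2
      = (x + y + c * n) ^ n := by
  rw [Nat.sum_antidiagonal_eq_sum_range_succ
    (fun i j => n.choose i * abelTerm c x i * (y + c * j) ^ j)]
  set T := x + y + c * n
  -- Expanding `y + c (n - k) = T - (x + c k)` and exchanging the sums, the coefficient of `T ^ i`
  -- for `i < n` is an `(n - i)`-th finite difference of a polynomial of degree `n - i - 1`.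
  have expand : ∀ k ∈ range (n + 1),
      n.choose k * abelTerm c x k * (y + c * (n - k : ℕ)) ^ (n - k)
        = ∑ i ∈ range (n - k + 1), n.choose i * T ^ i * ((-1) ^ (n - i - k) * (n - i).choose k
            * (abelTerm c x k * (x + c * k) ^ (n - i - k))) := by
    intro k hk
    have hsplit : y + c * (n - k : ℕ) = T + -(x + c * k) := by
      rw [Nat.cast_sub (Nat.lt_succ_iff.mp (mem_range.mp hk))]; ring
    rw [hsplit, add_pow, mul_sum]
    refine sum_congr rfl fun i hi => ?_
    have hchoose : (n.choose k : R) * (n - k).choose i = n.choose i * (n - i).choose k := by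
      simpa only [Nat.cast_mul] using
        congrArg (Nat.cast : ℕ → R) (Nat.choose_mul_choose_sub_comm n k i)
    rw [neg_pow, Nat.sub_right_comm n i k]
    linear_combination (T ^ i * (-1) ^ (n - k - i) * abelTerm c x k * (x + c * k) ^ (n - k - i))
      * hchoose
  rw [sum_congr rfl expand, sum_comm' (t' := range (n + 1)) (s' := fun i => range (n - i + 1))
    (fun k i => by simp only [mem_range]; omega), sum_range_succ, sum_eq_zero, zero_add]
  · simp
  · intro i hi
    rw [← mul_sum, sum_neg_one_pow_mul_choose_mul_abelTerm_mul_pow_eq_zero c x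
      (Nat.sub_pos_of_lt (mem_range.mp hi)), mul_zero]

lemma sum_choose_mul_abelTerm_mul_abelTerm_succ (c x y : R) (n : ℕ) :
    ∑ ij ∈ antidiagonal n, n.choose ij.1 * (abelTerm c x ij.1 * abelTerm c y (ij.2 + 1))
      = y * (x + y + c * (n + 1 : ℕ)) ^ n := by
  rw [show x + y + c * (n + 1 : ℕ) = x + (y + c) + c * n by push_cast; ring,
    ← sum_choose_mul_abelTerm_mul_pow c x (y + c), mul_sum]
  refine sum_congr rfl fun ij _ => ?_
  rw [abelTerm_succ]
  push_cast
  ring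

theorem sum_choose_mul_abelTerm_mul_abelTerm (c x y : R) (n : ℕ) :
    ∑ ij ∈ antidiagonal n, n.choose ij.1 * (abelTerm c x ij.1 * abelTerm c y ij.2)
      = abelTerm c (x + y) n := by
  cases n with
  | zero => simp
  | succ n =>
    rw [sum_antidiagonal_choose_succ_mul (fun i j => abelTerm c x i * abelTerm c y j),
      sum_choose_mul_abelTerm_mul_abelTerm_succ, ← Nat.sum_antidiagonal_swap]
    simp only [Prod.fst_swap, Prod.snd_swap, mul_comm (abelTerm c x _)]
    rw [sum_choose_mul_abelTerm_mul_abelTerm_succ, abelTerm_succ]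
    ring

end Abel

theorem sum_abelTerm_div_factorial_mul {K : Type*} [Field K] [CharZero K] (c x y : K) (n : ℕ) :
    ∑ ij ∈ antidiagonal n, abelTerm c x ij.1 / ij.1 ! * (abelTerm c y ij.2 / ij.2 !)
      = abelTerm c (x + y) n / n ! := by
  rw [← sum_choose_mul_abelTerm_mul_abelTerm, sum_div]
  refine sum_congr rfl fun ij hij => ?_
  obtain ⟨i, j⟩ := ij
  obtain rfl : i + j = n := mem_antidiagonal.mp hij
  have hchoose : ((i + j).choose j : K) ≠ 0 :=
    Nat.cast_ne_zero.mpr (Nat.choose_pos (Nat.le_add_left j i)).ne'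
  rw [← Nat.add_choose_mul_factorial_mul_factorial, Nat.choose_symm_add]
  push_cast
  field_simp

namespace PTree

lemma size_pos (t : PTree) : 0 < t.size := by
  cases t
  rw [size]
  exact Nat.succ_pos _

lemma sizeList_eq_zero_iff {l : List PTree} : sizeList l = 0 ↔ l = [] := by
  cases l with
  | nil => simp [sizeList]
  | cons t ts => simp [sizeList, (size_pos t).ne']

lemma sizeList_eq_succ_iff {l : List PTree} {n : ℕ} :
    sizeList l = n + 1 ↔ ∃ cs ts, l = node cs :: ts ∧ sizeList cs + sizeList ts = n := by
  constructor
  · intro h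
    match l with
    | [] => simp [sizeList] at h
    | node cs :: ts => exact ⟨cs, ts, rfl, by rw [sizeList, size] at h; omega⟩
  · rintro ⟨cs, ts, rfl, h⟩
    rw [sizeList, size]
    omega

lemma finite_setOf_sizeList_eq (n : ℕ) : {l : List PTree | sizeList l = n}.Finite := by
  induction n using Nat.strong_induction_on with
  | _ n ih =>
    cases n with
    | zero => simp [sizeList_eq_zero_iff]
    | succ n =>
      refine (Set.Finite.biUnion (antidiagonal n).finite_toSet fun ij hij =>
        ((ih ij.1 ?_).prod (ih ij.2 ?_)).image fun p => node p.1 :: p.2).subset ?_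
      · exact Nat.antidiagonal.fst_lt hij
      · exact Nat.antidiagonal.snd_lt hij
      · rintro l hl
        obtain ⟨cs, ts, rfl, h⟩ := sizeList_eq_succ_iff.mp hl
        simp only [Set.mem_iUnion]
        exact ⟨(sizeList cs, sizeList ts), mem_antidiagonal.mpr h, (cs, ts), ⟨rfl, rfl⟩,
          rfl⟩

noncomputable def forests (n : ℕ) : Finset (List PTree) := (finite_setOf_sizeList_eq n).toFinset

@[simp]
lemma mem_forests {n : ℕ} {l : List PTree} : l ∈ forests n ↔ sizeList l = n :=
  Set.Finite.mem_toFinset _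

lemma forests_zero : forests 0 = {[]} := by
  ext l
  simp [sizeList_eq_zero_iff]

lemma finsum_subtype_sizeList_eq {M : Type*} [AddCommMonoid M] (f : List PTree → M) (n : ℕ) :
    ∑ᶠ F : {l : List PTree // sizeList l = n}, f F = ∑ l ∈ forests n, f l := by
  rw [finsum_subtype_eq_finsum_cond]
  exact finsum_mem_eq_finite_toFinset_sum f (finite_setOf_sizeList_eq n)

lemma hooks_node (cs : List PTree) : hooks (node cs) = (sizeList cs).succPNat ::ₘ hooksList cs :=
  rfl

section Weight

variable {M : Type*} [CommSemiring M] (w : ℕ → M)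

def forestWeight (l : List PTree) : M := ((hooksList l).map fun h : ℕ+ => w h).prod

lemma forestWeight_nil : forestWeight w [] = 1 := by
  simp [forestWeight, hooksList]

lemma forestWeight_node_cons (cs ts : List PTree) :
    forestWeight w (node cs :: ts)
      = w (sizeList cs + 1) * forestWeight w cs * forestWeight w ts := by
  rw [forestWeight, forestWeight, forestWeight, hooksList, hooks_node, Multiset.map_add,
    Multiset.map_cons, Multiset.prod_add, Multiset.prod_cons, Nat.succPNat_coe, mul_assoc]

noncomputable def forestSum (n : ℕ) : M := ∑ l ∈ forests n, forestWeight w l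

lemma forestSum_zero : forestSum w 0 = 1 := by
  rw [forestSum, forests_zero, sum_singleton, forestWeight_nil]

theorem forestSum_succ (n : ℕ) :
    forestSum w (n + 1)
      = ∑ ij ∈ antidiagonal n, w (ij.1 + 1) * forestSum w ij.1 * forestSum w ij.2 := by
  simp_rw [forestSum, mul_assoc, sum_mul_sum, mul_sum, ← mul_assoc, ← sum_product']
  rw [sum_sigma']
  symm
  refine sum_bij (fun x _ => node x.2.1 :: x.2.2) ?_ ?_ ?_ ?_
  · rintro ⟨ij, cs, ts⟩ hx
    simp only [mem_sigma, HasAntidiagonal.mem_antidiagonal, mem_product, mem_forests] at hx ⊢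
    rw [sizeList, size, hx.2.1, hx.2.2, ← hx.1]
    ring
  · rintro ⟨⟨i, j⟩, cs, ts⟩ hx ⟨⟨i', j'⟩, cs', ts'⟩ hx' h
    simp only [mem_sigma, HasAntidiagonal.mem_antidiagonal, mem_product, mem_forests] at hx hx'
    simp only [List.cons.injEq, node.injEq] at h
    obtain ⟨rfl, rfl⟩ := h
    rw [← hx.2.1, ← hx.2.2, ← hx'.2.1, ← hx'.2.2]
  · intro l hl
    obtain ⟨cs, ts, rfl, h⟩ := sizeList_eq_succ_iff.mp (mem_forests.mp hl)
    exact ⟨⟨(sizeList cs, sizeList ts), cs, ts⟩, by simpa using h, rfl⟩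
  · rintro ⟨ij, cs, ts⟩ hx
    simp only [mem_sigma, HasAntidiagonal.mem_antidiagonal, mem_product, mem_forests] at hx
    rw [forestWeight_node_cons, hx.2.1]

theorem forestSum_eq_of_recurrence (u : ℕ → M) (h0 : u 0 = 1)
    (hsucc : ∀ n, u (n + 1) = ∑ ij ∈ antidiagonal n, w (ij.1 + 1) * u ij.1 * u ij.2)
    (n : ℕ) :
    forestSum w n = u n := by
  induction n using Nat.strong_induction_on with
  | _ n ih =>
    cases n with
    | zero => rw [forestSum_zero, h0]
    | succ n =>
      rw [forestSum_succ, hsucc]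
      refine sum_congr rfl fun ij hij => ?_
      rw [ih ij.1 (Nat.antidiagonal.fst_lt hij), ih ij.2 (Nat.antidiagonal.snd_lt hij)]

end Weight

end PTree

section HookWeight

variable {K : Type*} [Field K]

def hookWeight (z : K) (h : ℕ) : K :=
  (2 * (h : K) - z) ^ (h - 1) / ((h : K) * (2 * (h : K) - 2 + z) ^ ((h : ℤ) - 2))

variable [CharZero K]

lemma hookWeight_succ_mul_abelTerm_div_factorial (z : K) (i : ℕ) (hz : z + 2 * i ≠ 0) :
    hookWeight z (i + 1) * (abelTerm 2 z i / i !) = -abelTerm 2 (-z) (i + 1) / (i + 1)! := by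
  cases i with
  | zero => simp [hookWeight, abelTerm_succ]
  | succ b =>
    have hexp : ((b + 1 + 1 : ℕ) : ℤ) - 2 = (b : ℤ) := by push_cast; ring
    have hbase : 2 * ((b + 1 + 1 : ℕ) : K) - 2 + z = z + 2 * ((b + 1 : ℕ) : K) := by
      push_cast; ring
    rw [hookWeight, hexp, zpow_natCast, hbase, abelTerm_succ, abelTerm_succ,
      Nat.factorial_succ (b + 1)]
    field_simp
    push_cast
    ring

theorem abelTerm_div_factorial_succ (z : K) (hz : ∀ i : ℕ, z + 2 * i ≠ 0) (n : ℕ) :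
    abelTerm 2 z (n + 1) / (n + 1)! = ∑ ij ∈ antidiagonal n,
      hookWeight z (ij.1 + 1) * (abelTerm 2 z ij.1 / ij.1 !) * (abelTerm 2 z ij.2 / ij.2 !) := by
  have hconv := sum_abelTerm_div_factorial_mul 2 (-z) z (n + 1)
  rw [neg_add_cancel, Nat.sum_antidiagonal_succ] at hconv
  simp_rw [hookWeight_succ_mul_abelTerm_div_factorial z _ (hz _), neg_div, neg_mul, sum_neg_distrib]
  simp only [abelTerm_succ (2 : K) 0, zero_mul, zero_div, abelTerm_zero, Nat.factorial_zero,
    Nat.cast_one, div_one, one_mul] at hconv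
  linear_combination hconv

theorem forestSum_hookWeight (z : K) (hz : ∀ i : ℕ, z + 2 * i ≠ 0) (n : ℕ) :
    PTree.forestSum (hookWeight z) n = abelTerm 2 z n / n ! :=
  PTree.forestSum_eq_of_recurrence _ (fun n => abelTerm 2 z n / n !) (by simp)
    (abelTerm_div_factorial_succ z hz) n

end HookWeight

lemma RatFunc.X_add_natCast_ne_zero {F : Type*} [Field F] (k : ℕ) :
    (RatFunc.X : RatFunc F) + k ≠ 0 := by
  rw [← map_natCast (algebraMap F[X] (RatFunc F)), ← RatFunc.algebraMap_X, ← map_add,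
    ← Polynomial.C_eq_natCast]
  exact RatFunc.algebraMap_ne_zero (X_add_C_ne_zero _)

/-- The Abel-type hook length formula for plane forests, as an identity in `ℚ(z)`. -/
theorem abel_hook_formula_plane_forests (n : ℕ) (hn : 1 ≤ n) :
    letI K := RatFunc ℚ
    letI z : K := RatFunc.X
    ∑ᶠ F : {l : List PTree // PTree.sizeList l = n},
      (PTree.hooksList (F : List PTree) |>.map fun h =>
        (2 * ((h : ℕ) : K) - z) ^ ((h : ℕ) - 1) /
        (((h : ℕ) : K) * (2 * ((h : ℕ) : K) - 2 + z) ^ (((h : ℕ) : ℤ) - 2))).prod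
    = z / (n.factorial : K) * (2 * (n : K) + z) ^ (n - 1) := by
  obtain ⟨m, rfl⟩ := Nat.exists_eq_add_of_le' hn
  have hz (i : ℕ) : (RatFunc.X : RatFunc ℚ) + 2 * i ≠ 0 := by
    exact_mod_cast RatFunc.X_add_natCast_ne_zero (2 * i)
  calc _ = PTree.forestSum (hookWeight (RatFunc.X : RatFunc ℚ)) (m + 1) := by
        -- the statement coerces `hooksList` to `Multiset ℕ`, which elaborates as a monadic bind
        simp only [bind_pure_comp, Multiset.fmap_def, Multiset.map_map]
        exact PTree.finsum_subtype_sizeList_eq (PTree.forestWeight (hookWeight RatFunc.X)) (m + 1)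
    _ = _ := by
        rw [forestSum_hookWeight _ hz, abelTerm_succ]
        push_cast
        ring
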